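/- arXiv:2605.21848 — 2 statements merged into one kernel-verified Lean document; each statement's English description precedes it below -/
import Mathlib

section
/- For all real numbers a > 0 and b > 0, the integral over (0,∞) of log(1 + (a/b)x) · f_{a,b}(x) with respect to x equals ψ((a+b)/2) − ψ(b/2). -/
open MeasureTheory

/-- Digamma function `ψ(x) = d/dx log Γ(x)`. -/
noncomputable def digamma (x : ℝ) : ℝ :=
  deriv (fun y => Real.log (Real.Gamma y)) x

/-- Density of the F-distribution with degrees of freedom `(a, b)`. -/
noncomputable def fDensity (a b x : ℝ) : ℝ :=
  (Real.Gamma ((a + b) / 2) / (Real.Gamma (a / 2) * Real.Gamma (b / 2))) *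
    (a / b) ^ (a / 2) * x ^ (a / 2 - 1) * (1 + a * x / b) ^ (-((a + b) / 2))

/-!
With `p = a/2`, `q = b/2`, the substitutions `y = (a/b) x` and then `y = t/(1-t)` turn the
integral into `-B(p,q)⁻¹ ∫₀¹ t^(p-1) (1-t)^(q-1) log (1-t) dt`. The last integral is the
derivative in `q` of the Beta integral `B(p,q) = Γ(p) Γ(q) / Γ(p+q)`, obtained by differentiating
under the integral sign, and the logarithmic derivative of the right-hand side in `q` is
`ψ(q) - ψ(p+q)`.
-/

open Set Real ProbabilityTheory

lemma ofReal_cpow_mul_one_sub_cpow {p q t : ℝ} (ht : t ∈ Icc (0 : ℝ) 1) :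
    (t : ℂ) ^ ((p : ℂ) - 1) * (1 - (t : ℂ)) ^ ((q : ℂ) - 1)
      = ((t ^ (p - 1) * (1 - t) ^ (q - 1) : ℝ) : ℂ) := by
  rw [Complex.ofReal_mul, Complex.ofReal_cpow ht.1, Complex.ofReal_cpow (sub_nonneg.2 ht.2)]
  push_cast
  rfl

lemma integrableOn_rpow_mul_one_sub_rpow {p q : ℝ} (hp : 0 < p) (hq : 0 < q) :
    IntegrableOn (fun t : ℝ ↦ t ^ (p - 1) * (1 - t) ^ (q - 1)) (Ioo 0 1) := by
  have h := (intervalIntegrable_iff_integrableOn_Ioo_of_le zero_le_one).1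
    (Complex.betaIntegral_convergent (u := p) (v := q) (by simpa) (by simpa))
  refine IntegrableOn.congr_fun h.re (fun t ht ↦ ?_) measurableSet_Ioo
  simp [ofReal_cpow_mul_one_sub_cpow (Ioo_subset_Icc_self ht)]

lemma integral_rpow_mul_one_sub_rpow {p q : ℝ} (hp : 0 < p) (hq : 0 < q) :
    ∫ t in Ioo 0 1, t ^ (p - 1) * (1 - t) ^ (q - 1) = beta p q := by
  rw [beta_eq_betaIntegralReal p q hp hq, Complex.betaIntegral,
    intervalIntegral.integral_of_le zero_le_one, ← integral_Ioc_eq_integral_Ioo,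
    setIntegral_congr_fun measurableSet_Ioc
      (fun t ht ↦ ofReal_cpow_mul_one_sub_cpow (Ioc_subset_Icc_self ht)), integral_complex_ofReal,
    Complex.ofReal_re]

lemma hasDerivAt_Gamma_of_pos {x : ℝ} (hx : 0 < x) :
    HasDerivAt Gamma (Gamma x * digamma x) x := by
  have hdiff : DifferentiableAt ℝ Gamma x :=
    differentiableAt_Gamma fun m h ↦ by linarith [h ▸ hx, m.cast_nonneg (α := ℝ)]
  have hΓ := (Gamma_pos_of_pos hx).ne'
  rw [digamma, deriv.log hdiff hΓ, mul_div_cancel₀ _ hΓ]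
  exact hdiff.hasDerivAt

lemma hasDerivAt_beta_right {p q : ℝ} (hp : 0 < p) (hq : 0 < q) :
    HasDerivAt (beta p) (beta p q * (digamma q - digamma (p + q))) q := by
  have hpq : 0 < p + q := add_pos hp hq
  have hΓ := (Gamma_pos_of_pos hpq).ne'
  refine (((hasDerivAt_Gamma_of_pos hq).const_mul (Gamma p)).div
    ((hasDerivAt_Gamma_of_pos hpq).comp_const_add p q) hΓ).congr_deriv ?_
  rw [beta]
  field_simp

lemma abs_rpow_mul_log_le {s ε : ℝ} (hs0 : 0 < s) (hs1 : s ≤ 1) (hε : 0 < ε) (y : ℝ) :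
    |s ^ y * log s| ≤ s ^ (y - ε) / ε := by
  have hpos := rpow_pos_of_pos hs0 (y - ε)
  have hsplit : s ^ y = s ^ (y - ε) * s ^ ε := by rw [← rpow_add hs0, sub_add_cancel]
  calc |s ^ y * log s| = s ^ (y - ε) * |log s * s ^ ε| := by
        rw [hsplit, abs_mul, abs_mul, abs_mul, abs_of_pos hpos]
        ring
    _ ≤ s ^ (y - ε) * (1 / ε) :=
        mul_le_mul_of_nonneg_left (abs_log_mul_self_rpow_lt s ε hs0 hs1 hε).le hpos.le
    _ = s ^ (y - ε) / ε := mul_one_div _ _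

lemma hasDerivAt_integral_rpow_mul_one_sub_rpow {p q : ℝ} (hp : 0 < p) (hq : 0 < q) :
    HasDerivAt (fun y ↦ ∫ t in Ioo 0 1, t ^ (p - 1) * (1 - t) ^ (y - 1))
      (∫ t in Ioo 0 1, t ^ (p - 1) * (1 - t) ^ (q - 1) * log (1 - t)) q := by
  have hq2 : 0 < q / 2 := half_pos hq
  have hq4 : 0 < q / 4 := by positivity
  -- On `|y - q| < q/2` the factor `(1 - t) ^ (q/4)` absorbs the logarithmic singularity at `t = 1`.
  refine (hasDerivAt_integral_of_dominated_loc_of_deriv_le (μ := volume.restrict (Ioo 0 1))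
    (F := fun y t ↦ t ^ (p - 1) * (1 - t) ^ (y - 1))
    (F' := fun y t ↦ t ^ (p - 1) * (1 - t) ^ (y - 1) * log (1 - t))
    (bound := fun t ↦ t ^ (p - 1) * (1 - t) ^ (q / 4 - 1) / (q / 4))
    (Metric.ball_mem_nhds q hq2) ?_ (integrableOn_rpow_mul_one_sub_rpow hp hq)
    (Measurable.aestronglyMeasurable (by fun_prop)) ?_
    ((integrableOn_rpow_mul_one_sub_rpow hp hq4).div_const _) ?_).2
  · exact .of_forall fun y ↦ Measurable.aestronglyMeasurable (by fun_prop)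
  · refine (ae_restrict_iff' measurableSet_Ioo).2 (.of_forall fun t ⟨ht0, ht1⟩ y hy ↦ ?_)
    rw [Metric.mem_ball, Real.dist_eq, abs_lt] at hy
    have h1t : 0 < 1 - t := sub_pos.2 ht1
    calc ‖t ^ (p - 1) * (1 - t) ^ (y - 1) * log (1 - t)‖
        = t ^ (p - 1) * |(1 - t) ^ (y - 1) * log (1 - t)| := by
          rw [mul_assoc, norm_mul, Real.norm_eq_abs, Real.norm_eq_abs,
            abs_of_pos (rpow_pos_of_pos ht0 _)]
      _ ≤ t ^ (p - 1) * ((1 - t) ^ (y - 1 - q / 4) / (q / 4)) := by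
          gcongr
          exact abs_rpow_mul_log_le h1t (by linarith) hq4 _
      _ ≤ t ^ (p - 1) * ((1 - t) ^ (q / 4 - 1) / (q / 4)) := by
          gcongr ?_ * (?_ / _)
          exact rpow_le_rpow_of_exponent_ge h1t (by linarith) (by linarith)
      _ = _ := by ring
  · refine (ae_restrict_iff' measurableSet_Ioo).2 (.of_forall fun t ⟨_, ht1⟩ y _ ↦ ?_)
    have h := ((hasStrictDerivAt_const_rpow (sub_pos.2 ht1) (y - 1)).hasDerivAt.comp y
      ((hasDerivAt_id y).sub_const 1)).const_mul (t ^ (p - 1))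
    simpa [mul_assoc] using h

lemma integral_rpow_mul_one_sub_rpow_mul_log_one_sub {p q : ℝ} (hp : 0 < p) (hq : 0 < q) :
    ∫ t in Ioo 0 1, t ^ (p - 1) * (1 - t) ^ (q - 1) * log (1 - t)
      = beta p q * (digamma q - digamma (p + q)) :=
  (hasDerivAt_integral_rpow_mul_one_sub_rpow hp hq).unique <|
    (hasDerivAt_beta_right hp hq).congr_of_eventuallyEq <|
      (eventually_gt_nhds hq).mono fun _ hy ↦ integral_rpow_mul_one_sub_rpow hp hy

lemma image_div_one_sub_Ioo : (fun t : ℝ ↦ t / (1 - t)) '' Ioo 0 1 = Ioi 0 := by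
  ext x
  constructor
  · rintro ⟨t, ⟨ht0, ht1⟩, rfl⟩
    exact div_pos ht0 (sub_pos.2 ht1)
  · intro hx
    have hx1 : (0 : ℝ) < 1 + x := by linarith [mem_Ioi.1 hx]
    refine ⟨x / (1 + x), ⟨div_pos hx hx1, (div_lt_one hx1).2 (by linarith)⟩, ?_⟩
    field_simp
    ring

lemma injOn_div_one_sub : InjOn (fun t : ℝ ↦ t / (1 - t)) (Iio 1) := by
  intro s hs t ht hst
  have hs1 : 1 - s ≠ 0 := (sub_pos.2 hs).ne'
  have ht1 : 1 - t ≠ 0 := (sub_pos.2 ht).ne'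
  simp only at hst
  field_simp at hst
  linarith

lemma hasDerivAt_div_one_sub {t : ℝ} (ht : t ≠ 1) :
    HasDerivAt (fun t ↦ t / (1 - t)) (((1 - t) ^ 2)⁻¹) t := by
  have h1t : 1 - t ≠ 0 := sub_ne_zero.2 ht.symm
  refine ((hasDerivAt_id t).div ((hasDerivAt_id t).const_sub 1) h1t).congr_deriv ?_
  simp only [id_eq]
  field_simp
  ring

lemma integral_Ioi_zero_eq_integral_Ioo_div_one_sub {E : Type*} [NormedAddCommGroup E]
    [NormedSpace ℝ E] (g : ℝ → E) :
    ∫ x in Ioi 0, g x = ∫ t in Ioo 0 1, ((1 - t) ^ 2)⁻¹ • g (t / (1 - t)) := by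
  rw [← image_div_one_sub_Ioo, integral_image_eq_integral_abs_deriv_smul measurableSet_Ioo
    (fun t ht ↦ (hasDerivAt_div_one_sub ht.2.ne).hasDerivWithinAt)
    (injOn_div_one_sub.mono fun t ht ↦ ht.2)]
  refine setIntegral_congr_fun measurableSet_Ioo fun t _ ↦ ?_
  rw [abs_of_nonneg (by positivity)]

noncomputable def betaPrimeKernel (p q y : ℝ) : ℝ := y ^ (p - 1) * (1 + y) ^ (-(p + q))

lemma fDensity_eq_betaPrimeKernel {a b x : ℝ} (ha : 0 < a) (hb : 0 < b) (hx : 0 ≤ x) :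
    fDensity a b x
      = a / b * (beta (a / 2) (b / 2))⁻¹ * betaPrimeKernel (a / 2) (b / 2) (a / b * x) := by
  have hc : 0 < a / b := div_pos ha hb
  rw [fDensity, betaPrimeKernel, beta, inv_div, add_div, mul_rpow hc.le hx,
    rpow_sub_one hc.ne']
  field_simp

lemma betaPrimeKernel_div_one_sub {p q t : ℝ} (ht : t ∈ Ioo 0 1) :
    betaPrimeKernel p q (t / (1 - t)) = (1 - t) ^ 2 * (t ^ (p - 1) * (1 - t) ^ (q - 1)) := by
  have h1t : 0 < 1 - t := sub_pos.2 ht.2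
  have hsum : 1 + t / (1 - t) = (1 - t)⁻¹ := by field_simp; ring
  have hexp : (1 - t) ^ (p + q) = (1 - t) ^ (2 : ℝ) * (1 - t) ^ (q - 1) * (1 - t) ^ (p - 1) := by
    rw [← rpow_add h1t, ← rpow_add h1t]
    ring_nf
  rw [betaPrimeKernel, hsum, div_rpow ht.1.le h1t.le, inv_rpow h1t.le, ← rpow_neg h1t.le, neg_neg,
    hexp, rpow_two]
  field_simp

lemma log_one_add_div_one_sub {t : ℝ} (ht : t < 1) : log (1 + t / (1 - t)) = -log (1 - t) := by
  have h1t : 1 - t ≠ 0 := (sub_pos.2 ht).ne'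
  rw [← log_inv]
  congr 1
  field_simp
  ring

theorem stmt_4 (a b : ℝ) (ha : 0 < a) (hb : 0 < b) :
    ∫ x in Set.Ioi (0 : ℝ), Real.log (1 + (a / b) * x) * fDensity a b x
      = digamma ((a + b) / 2) - digamma (b / 2) := by
  set p := a / 2
  set q := b / 2
  have hc : 0 < a / b := div_pos ha hb
  have hB : beta p q ≠ 0 := (beta_pos (half_pos ha) (half_pos hb)).ne'
  set g : ℝ → ℝ := fun y ↦ log (1 + y) * betaPrimeKernel p q y
  calc ∫ x in Ioi 0, log (1 + a / b * x) * fDensity a b x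
      = ∫ x in Ioi 0, a / b * ((beta p q)⁻¹ * g (a / b * x)) :=
        setIntegral_congr_fun measurableSet_Ioi fun x hx ↦ by
          rw [fDensity_eq_betaPrimeKernel ha hb (le_of_lt hx)]
          ring
    _ = (beta p q)⁻¹ * ∫ y in Ioi 0, g y := by
        rw [integral_const_mul, integral_const_mul, integral_comp_mul_left_Ioi g 0 hc, mul_zero,
          smul_eq_mul]
        field_simp
    _ = (beta p q)⁻¹ * ∫ t in Ioo 0 1, -(t ^ (p - 1) * (1 - t) ^ (q - 1) * log (1 - t)) := by
        rw [integral_Ioi_zero_eq_integral_Ioo_div_one_sub]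
        congr 1
        refine setIntegral_congr_fun measurableSet_Ioo fun t ht ↦ ?_
        have h1t : 1 - t ≠ 0 := (sub_pos.2 ht.2).ne'
        simp only [g, smul_eq_mul]
        rw [log_one_add_div_one_sub ht.2, betaPrimeKernel_div_one_sub ht]
        field_simp
    _ = digamma ((a + b) / 2) - digamma q := by
        rw [integral_neg, integral_rpow_mul_one_sub_rpow_mul_log_one_sub (half_pos ha)
          (half_pos hb), add_div]
        field_simp
        ring
end

section
/- For all real numbers a > 0 and b > 0, the integral over (0,∞) of (log(1 + (a/b)x))^2 · f_{a,b}(x) with respect to x equals (ψ(b/2) − ψ((a+b)/2))^2 + ψ′(b/2) − ψ′((a+b)/2). -/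
open MeasureTheory

/-- Trigamma function `ψ′(x) = d²/dx² log Γ(x)`. -/
noncomputable def trigamma (x : ℝ) : ℝ :=
  deriv (deriv (fun y => Real.log (Real.Gamma y))) x

/-!
The substitution `x = y / (c (1 - y))` with `c = a / b` carries the F-density with degrees of
freedom `(a, b)` to the Beta density with parameters `(a/2, b/2)` and `log (1 + c x)` to
`-log (1 - y)`. Hence the integral is `∂²_v B(u, v) / B(u, v)` at `(u, v) = (a/2, b/2)`,
differentiating the Beta integral under the integral sign. Since
`log B(u, v) = log Γ(u) + log Γ(v) - log Γ(u + v)`, this quotient is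
`(∂_v log B)² + ∂²_v log B = (ψ(v) - ψ(u + v))² + ψ′(v) - ψ′(u + v)`.
-/

open Set Real

lemma ne_neg_natCast_of_pos {x : ℝ} (hx : 0 < x) (m : ℕ) : x ≠ -m := by
  have : (0 : ℝ) ≤ m := m.cast_nonneg
  linarith

lemma contDiffAt_Gamma {x : ℝ} (hx : ∀ m : ℕ, x ≠ -m) {n : WithTop ℕ∞} :
    ContDiffAt ℝ n Gamma x := by
  have hne : Complex.Gamma x ≠ 0 :=
    Complex.Gamma_ne_zero fun m hm => hx m (by exact_mod_cast hm)
  have hΓ : ContDiffAt ℂ n Complex.Gamma x := by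
    have h := (Complex.differentiable_one_div_Gamma.contDiff (n := n)).contDiffAt.inv
      (inv_ne_zero hne)
    simpa only [Pi.inv_def, inv_inv] using h
  simpa [Complex.Gamma_ofReal] using hΓ.real_of_complex

lemma contDiffOn_log_Gamma {n : WithTop ℕ∞} :
    ContDiffOn ℝ n (fun y => log (Gamma y)) (Ioi 0) := fun _ hx =>
  ((contDiffAt_Gamma (ne_neg_natCast_of_pos hx)).log (Gamma_pos_of_pos hx).ne').contDiffWithinAt

lemma hasDerivAt_log_Gamma {x : ℝ} (hx : 0 < x) :
    HasDerivAt (fun y => log (Gamma y)) (digamma x) x :=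
  ((contDiffOn_log_Gamma (n := 1)).differentiableOn one_ne_zero |>.differentiableAt
    (Ioi_mem_nhds hx)).hasDerivAt

lemma hasDerivAt_digamma {x : ℝ} (hx : 0 < x) : HasDerivAt digamma (trigamma x) x :=
  (((contDiffOn_log_Gamma (n := 2)).deriv_of_isOpen isOpen_Ioi (m := 1) (by norm_num))
    |>.differentiableOn one_ne_zero |>.differentiableAt (Ioi_mem_nhds hx)).hasDerivAt

lemma integral_rpow_mul_one_sub_rpow_s5 {u v : ℝ} (hu : 0 < u) (hv : 0 < v) :
    ∫ y in Ioo (0 : ℝ) 1, y ^ (u - 1) * (1 - y) ^ (v - 1) =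
      Gamma u * Gamma v / Gamma (u + v) := by
  have hbeta : Complex.betaIntegral u v =
      ((∫ y in Ioo (0 : ℝ) 1, y ^ (u - 1) * (1 - y) ^ (v - 1) : ℝ) : ℂ) := by
    rw [Complex.betaIntegral, intervalIntegral.integral_of_le zero_le_one,
      integral_Ioc_eq_integral_Ioo, ← integral_complex_ofReal]
    refine setIntegral_congr_fun measurableSet_Ioo fun y hy => ?_
    have h1y : 0 ≤ 1 - y := by linarith [hy.2]
    push_cast [Complex.ofReal_cpow hy.1.le, Complex.ofReal_cpow h1y]
    rfl
  have h := Complex.Gamma_mul_Gamma_eq_betaIntegral (s := u) (t := v)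
    (by simpa using hu) (by simpa using hv)
  rw [hbeta, ← Complex.ofReal_add, Complex.Gamma_ofReal, Complex.Gamma_ofReal,
    Complex.Gamma_ofReal] at h
  have h' : Gamma u * Gamma v =
      Gamma (u + v) * ∫ y in Ioo (0 : ℝ) 1, y ^ (u - 1) * (1 - y) ^ (v - 1) := by
    exact_mod_cast h
  rw [h', mul_div_cancel_left₀ _ (Gamma_pos_of_pos (add_pos hu hv)).ne']

lemma integrableOn_rpow_mul_one_sub_rpow_s5 {u v : ℝ} (hu : 0 < u) (hv : 0 < v) :
    IntegrableOn (fun y => y ^ (u - 1) * (1 - y) ^ (v - 1)) (Ioo (0 : ℝ) 1) := by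
  have h := Complex.betaIntegral_convergent (u := u) (v := v) (by simpa using hu)
    (by simpa using hv)
  rw [intervalIntegrable_iff_integrableOn_Ioo_of_le zero_le_one] at h
  refine IntegrableOn.congr_fun h.norm (fun y hy => ?_) measurableSet_Ioo
  have h1y : 0 < 1 - y := by linarith [hy.2]
  have hcast : (1 : ℂ) - y = ((1 - y : ℝ) : ℂ) := by push_cast; rfl
  rw [norm_mul, hcast, Complex.norm_cpow_eq_rpow_re_of_pos hy.1,
    Complex.norm_cpow_eq_rpow_re_of_pos h1y]
  simp

lemma rpow_mul_one_sub_rpow_nonneg {y : ℝ} (hy₀ : 0 ≤ y) (hy₁ : y ≤ 1) (p q : ℝ) :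
    0 ≤ y ^ p * (1 - y) ^ q :=
  mul_nonneg (rpow_nonneg hy₀ p) (rpow_nonneg (by linarith) q)

lemma abs_log_pow_le {t e : ℝ} (ht : 0 < t) (ht1 : t ≤ 1) (he : 0 < e) (k : ℕ) :
    |log t| ^ k ≤ e⁻¹ ^ k * t ^ (-(e * k)) := by
  have hlog : |log t| ≤ e⁻¹ * t ^ (-e) := by
    rw [abs_of_nonpos (log_nonpos ht.le ht1), ← log_inv, rpow_neg ht.le, ← inv_rpow ht.le,
      mul_comm, ← div_eq_mul_inv]
    exact log_le_rpow_div (inv_nonneg.mpr ht.le) he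
  calc |log t| ^ k ≤ (e⁻¹ * t ^ (-e)) ^ k := pow_le_pow_left₀ (abs_nonneg _) hlog k
    _ = e⁻¹ ^ k * t ^ (-(e * k)) := by
      rw [mul_pow, ← rpow_natCast (t ^ (-e)), ← rpow_mul ht.le, neg_mul]

noncomputable def betaLogIntegral (k : ℕ) (u v : ℝ) : ℝ :=
  ∫ y in Ioo (0 : ℝ) 1, log (1 - y) ^ k * (y ^ (u - 1) * (1 - y) ^ (v - 1))

lemma integrableOn_abs_log_one_sub_pow_mul {u v : ℝ} (hu : 0 < u) (hv : 0 < v) (k : ℕ) :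
    IntegrableOn (fun y => |log (1 - y)| ^ k * (y ^ (u - 1) * (1 - y) ^ (v - 1)))
      (Ioo (0 : ℝ) 1) := by
  -- `e * k ≤ v / 2`, so the dominating function `y ^ (u - 1) (1 - y) ^ (v - e k - 1)` is a
  -- Beta integrand
  set e := v / (2 * (k + 1))
  have he : 0 < e := by positivity
  have hv' : 0 < v - e * k := by
    have : e * k ≤ v / 2 := by
      rw [div_mul_eq_mul_div, div_le_div_iff₀ (by positivity) two_pos]
      nlinarith
    linarith
  refine ((integrableOn_rpow_mul_one_sub_rpow_s5 hu hv').const_mul (e⁻¹ ^ k)).mono'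
    (by fun_prop) ((ae_restrict_iff' measurableSet_Ioo).mpr (ae_of_all _ fun y hy => ?_))
  have h1y : 0 < 1 - y := by linarith [hy.2]
  have hsplit : (1 - y) ^ (v - e * k - 1) = (1 - y) ^ (-(e * k)) * (1 - y) ^ (v - 1) := by
    rw [← rpow_add h1y]
    ring_nf
  rw [Real.norm_of_nonneg (mul_nonneg (by positivity)
    (rpow_mul_one_sub_rpow_nonneg hy.1.le hy.2.le _ _)), hsplit]
  calc |log (1 - y)| ^ k * (y ^ (u - 1) * (1 - y) ^ (v - 1))
      ≤ e⁻¹ ^ k * (1 - y) ^ (-(e * k)) * (y ^ (u - 1) * (1 - y) ^ (v - 1)) := by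
        gcongr
        · exact rpow_mul_one_sub_rpow_nonneg hy.1.le hy.2.le _ _
        · exact abs_log_pow_le h1y (by linarith [hy.1]) he k
    _ = _ := by ring

lemma integrableOn_log_one_sub_pow_mul {u v : ℝ} (hu : 0 < u) (hv : 0 < v) (k : ℕ) :
    IntegrableOn (fun y => log (1 - y) ^ k * (y ^ (u - 1) * (1 - y) ^ (v - 1)))
      (Ioo (0 : ℝ) 1) := by
  refine (integrable_norm_iff (by fun_prop)).mp
    ((integrableOn_abs_log_one_sub_pow_mul hu hv k).congr_fun (fun y hy => ?_) measurableSet_Ioo)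
  rw [norm_mul, norm_pow, Real.norm_eq_abs,
    Real.norm_of_nonneg (rpow_mul_one_sub_rpow_nonneg hy.1.le hy.2.le _ _)]

lemma hasDerivAt_betaLogIntegral {u v : ℝ} (hu : 0 < u) (hv : 0 < v) (k : ℕ) :
    HasDerivAt (betaLogIntegral k u) (betaLogIntegral (k + 1) u v) v := by
  have hε : 0 < v / 2 := half_pos hv
  refine (hasDerivAt_integral_of_dominated_loc_of_deriv_le (μ := volume.restrict (Ioo (0 : ℝ) 1))
    (F := fun s y => log (1 - y) ^ k * (y ^ (u - 1) * (1 - y) ^ (s - 1)))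
    (F' := fun s y => log (1 - y) ^ (k + 1) * (y ^ (u - 1) * (1 - y) ^ (s - 1)))
    (bound := fun y => |log (1 - y)| ^ (k + 1) * (y ^ (u - 1) * (1 - y) ^ (v / 2 - 1)))
    (Metric.ball_mem_nhds v hε) (.of_forall fun s => by fun_prop)
    (integrableOn_log_one_sub_pow_mul hu hv k) (by fun_prop) ?_
    (integrableOn_abs_log_one_sub_pow_mul hu hε (k + 1)) ?_).2
  all_goals
    refine (ae_restrict_iff' measurableSet_Ioo).mpr (ae_of_all _ fun y hy s hs => ?_)
    have h1y : 0 < 1 - y := by linarith [hy.2]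
  · have hs' : v / 2 - 1 ≤ s - 1 := by
      rw [Metric.mem_ball, Real.dist_eq, abs_sub_lt_iff] at hs
      linarith
    rw [norm_mul, norm_pow, Real.norm_eq_abs,
      Real.norm_of_nonneg (rpow_mul_one_sub_rpow_nonneg hy.1.le hy.2.le _ _)]
    refine mul_le_mul_of_nonneg_left (mul_le_mul_of_nonneg_left ?_ (rpow_nonneg hy.1.le _))
      (by positivity)
    exact rpow_le_rpow_of_exponent_ge h1y (by linarith [hy.1]) hs'
  · have h := ((hasDerivAt_id' s).sub_const 1).const_rpow h1y
    exact ((h.const_mul (log (1 - y) ^ k * y ^ (u - 1))).congr_deriv (by ring))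
      |>.congr_of_eventuallyEq (.of_forall fun t => by ring)

lemma betaLogIntegral_zero {u v : ℝ} (hu : 0 < u) (hv : 0 < v) :
    betaLogIntegral 0 u v = Gamma u * Gamma v / Gamma (u + v) := by
  simpa [betaLogIntegral] using integral_rpow_mul_one_sub_rpow_s5 hu hv

lemma hasDerivAt_betaLogIntegral_zero {u v : ℝ} (hu : 0 < u) (hv : 0 < v) :
    HasDerivAt (betaLogIntegral 0 u) ((digamma v - digamma (u + v)) * betaLogIntegral 0 u v) v := by
  have hlog : HasDerivAt (fun t => log (Gamma u) + log (Gamma t) - log (Gamma (u + t)))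
      (digamma v - digamma (u + v)) v :=
    ((hasDerivAt_log_Gamma hv).const_add _).sub
      ((hasDerivAt_log_Gamma (add_pos hu hv)).comp_const_add u v)
  have hexp : ∀ t ∈ Ioi (0 : ℝ),
      betaLogIntegral 0 u t = exp (log (Gamma u) + log (Gamma t) - log (Gamma (u + t))) := by
    intro t ht
    rw [betaLogIntegral_zero hu ht, exp_sub, exp_add, exp_log (Gamma_pos_of_pos hu),
      exp_log (Gamma_pos_of_pos ht), exp_log (Gamma_pos_of_pos (add_pos hu ht))]
  rw [hexp v hv, mul_comm]
  exact hlog.exp.congr_of_eventuallyEq (Filter.eventually_of_mem (Ioi_mem_nhds hv) hexp)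

lemma betaLogIntegral_one {u v : ℝ} (hu : 0 < u) (hv : 0 < v) :
    betaLogIntegral 1 u v = (digamma v - digamma (u + v)) * betaLogIntegral 0 u v :=
  (hasDerivAt_betaLogIntegral hu hv 0).unique (hasDerivAt_betaLogIntegral_zero hu hv)

lemma betaLogIntegral_two {u v : ℝ} (hu : 0 < u) (hv : 0 < v) :
    betaLogIntegral 2 u v =
      ((digamma v - digamma (u + v)) ^ 2 + (trigamma v - trigamma (u + v))) *
        betaLogIntegral 0 u v := by
  have hψ : HasDerivAt (fun t => digamma t - digamma (u + t)) (trigamma v - trigamma (u + v)) v :=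
    (hasDerivAt_digamma hv).sub ((hasDerivAt_digamma (add_pos hu hv)).comp_const_add u v)
  have hone : betaLogIntegral 1 u =ᶠ[nhds v]
      fun t => (digamma t - digamma (u + t)) * betaLogIntegral 0 u t :=
    Filter.eventually_of_mem (Ioi_mem_nhds hv) fun t ht => betaLogIntegral_one hu ht
  rw [(hasDerivAt_betaLogIntegral hu hv 1).unique
    ((hψ.mul (hasDerivAt_betaLogIntegral_zero hu hv)).congr_of_eventuallyEq hone)]
  ring

lemma image_Ioo_div_one_sub {c : ℝ} (hc : 0 < c) :
    (fun y => c⁻¹ * (y / (1 - y))) '' Ioo 0 1 = Ioi 0 := by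
  ext x
  constructor
  · rintro ⟨y, hy, rfl⟩
    have h1y : 0 < 1 - y := by linarith [hy.2]
    exact mul_pos (inv_pos.mpr hc) (div_pos hy.1 h1y)
  · intro hx
    have hx : 0 < x := hx
    refine ⟨c * x / (1 + c * x),
      ⟨by positivity, (div_lt_one (by positivity)).mpr (by linarith)⟩, ?_⟩
    field_simp
    ring

lemma injOn_div_one_sub_s5 {c : ℝ} (hc : 0 < c) :
    InjOn (fun y => c⁻¹ * (y / (1 - y))) (Ioo 0 1) := by
  intro x hx y hy h
  have h1x : 1 - x ≠ 0 := by linarith [hx.2]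
  have h1y : 1 - y ≠ 0 := by linarith [hy.2]
  field_simp at h
  linarith

lemma integral_Ioi_eq_integral_Ioo_div_one_sub {c : ℝ} (hc : 0 < c) (g : ℝ → ℝ) :
    ∫ x in Ioi 0, g x = ∫ y in Ioo 0 1, c⁻¹ / (1 - y) ^ 2 * g (c⁻¹ * (y / (1 - y))) := by
  have hderiv : ∀ y ∈ Ioo (0 : ℝ) 1,
      HasDerivWithinAt (fun y => c⁻¹ * (y / (1 - y))) (c⁻¹ / (1 - y) ^ 2) (Ioo 0 1) y := by
    intro y hy
    have h1y : 1 - y ≠ 0 := by linarith [hy.2]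
    refine (((hasDerivAt_id' y).div ((hasDerivAt_id' y).const_sub 1) h1y).const_mul
      c⁻¹).hasDerivWithinAt.congr_deriv ?_
    field_simp
    ring
  rw [← image_Ioo_div_one_sub hc, integral_image_eq_integral_abs_deriv_smul measurableSet_Ioo
    hderiv (injOn_div_one_sub_s5 hc)]
  refine setIntegral_congr_fun measurableSet_Ioo fun y hy => ?_
  have h1y : 0 < 1 - y := by linarith [hy.2]
  rw [smul_eq_mul, abs_of_pos (div_pos (inv_pos.mpr hc) (pow_pos h1y 2))]

lemma rpow_mul_one_add_rpow_of_div_one_sub {c α β y : ℝ} (hc : 0 < c) (hy : y ∈ Ioo 0 1) :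
    c⁻¹ / (1 - y) ^ 2 * (c ^ α * (c⁻¹ * (y / (1 - y))) ^ (α - 1) *
      (1 + c * (c⁻¹ * (y / (1 - y)))) ^ (-(α + β))) = y ^ (α - 1) * (1 - y) ^ (β - 1) := by
  set t := 1 - y
  have ht : 0 < t := by linarith [hy.2]
  have hsum : 1 + c * (c⁻¹ * (y / t)) = t⁻¹ := by
    field_simp
    ring
  have hx : c⁻¹ * (y / t) = y * (c * t)⁻¹ := by field_simp
  have hc' : c ^ α * c ^ (-(α - 1)) = c := by
    rw [← rpow_add hc]
    norm_num
  have ht' : t ^ (-(α - 1)) * t ^ (α + β) = t ^ (β - 1) * t ^ 2 := by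
    rw [← rpow_add ht, ← rpow_natCast, ← rpow_add ht]
    ring_nf
  rw [hsum, hx, mul_rpow hy.1.le (by positivity), inv_rpow (by positivity), ← rpow_neg
    (by positivity), mul_rpow hc.le ht.le, inv_rpow ht.le, ← rpow_neg ht.le, neg_neg]
  calc _ = c⁻¹ * (c ^ α * c ^ (-(α - 1))) * y ^ (α - 1) *
        (t ^ (-(α - 1)) * t ^ (α + β)) / t ^ 2 := by ring
    _ = y ^ (α - 1) * t ^ (β - 1) := by
        rw [hc', ht']
        field_simp

lemma integral_comp_log_one_add_mul_fDensity {a b : ℝ} (ha : 0 < a) (hb : 0 < b)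
    (g : ℝ → ℝ) :
    ∫ x in Ioi 0, g (log (1 + a / b * x)) * fDensity a b x =
      Gamma ((a + b) / 2) / (Gamma (a / 2) * Gamma (b / 2)) *
        ∫ y in Ioo 0 1, g (-log (1 - y)) * (y ^ (a / 2 - 1) * (1 - y) ^ (b / 2 - 1)) := by
  have hc : 0 < a / b := div_pos ha hb
  rw [integral_Ioi_eq_integral_Ioo_div_one_sub hc, ← integral_const_mul]
  refine setIntegral_congr_fun measurableSet_Ioo fun y hy => ?_
  have h1y : 1 - y ≠ 0 := by linarith [hy.2]
  have hlog : log (1 + a / b * ((a / b)⁻¹ * (y / (1 - y)))) = -log (1 - y) := by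
    rw [← log_inv]
    congr 1
    field_simp
    ring
  rw [hlog, fDensity, mul_div_right_comm a, show -((a + b) / 2) = -(a / 2 + b / 2) by ring,
    ← rpow_mul_one_add_rpow_of_div_one_sub hc hy]
  ring

theorem stmt_5 (a b : ℝ) (ha : 0 < a) (hb : 0 < b) :
    ∫ x in Set.Ioi (0 : ℝ), (Real.log (1 + (a / b) * x)) ^ 2 * fDensity a b x
      = (digamma (b / 2) - digamma ((a + b) / 2)) ^ 2
          + (trigamma (b / 2) - trigamma ((a + b) / 2)) := by
  have hα : 0 < a / 2 := half_pos ha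
  have hβ : 0 < b / 2 := half_pos hb
  have hmoment : ∫ x in Ioi 0, log (1 + a / b * x) ^ 2 * fDensity a b x =
      Gamma ((a + b) / 2) / (Gamma (a / 2) * Gamma (b / 2)) *
        betaLogIntegral 2 (a / 2) (b / 2) := by
    have h := integral_comp_log_one_add_mul_fDensity ha hb fun t => t ^ 2
    beta_reduce at h
    simp only [neg_sq] at h
    exact h
  have hΓα := (Gamma_pos_of_pos hα).ne'
  have hΓβ := (Gamma_pos_of_pos hβ).ne'
  rw [hmoment, betaLogIntegral_two hα hβ, betaLogIntegral_zero hα hβ, ← add_div]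
  field_simp
end
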